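/- Let ψ = φ^⟨-1⟩ be the compositional inverse of φ, and let B be an upper triangular matrix satisfying A·B = B·A = I. Then for every nonnegative integer s and all 1 ≤ k ≤ n, [B^s]_{k,n} = (a_k/a_n)·B_{n,k}(ψ^⟨s⟩), where B_{n,k}(F) denotes the partial Bell polynomial of a power series F with F(0) = 0, defined by B_{n,k}(F) = (n!/k!) times the coefficient of t^n in F(t)^k. -/

import Mathlib

/-!
The weighted Bell matrix `M(F)` with entries `(a_k/a_n)·B_{n,k}(F)` turns composition of series
into matrix multiplication: since `(F ∘ G)^k = F^k ∘ G`, reading off the coefficient of `t^n`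
gives `B_{n,k}(F ∘ G) = ∑_j B_{j,k}(F)·B_{n,j}(G)`, and the weights `a_k/a_j · a_j/a_n` telescope.
Hence `A·M(ψ) = M(φ ∘ ψ) = M(t) = I`, so the left inverse `B` of `A` equals `M(ψ)`, and
`B^s = M(ψ)^s = M(ψ^⟨s⟩)`.
-/

open PowerSeries Finset

noncomputable section

/-- Product of two infinite matrices of complex numbers (indexed by positive integers,
upper triangular): `[A·B]_{k,n} = ∑_{j=k}^{n} [A]_{k,j}·[B]_{j,n}`. -/
def triMul (A B : ℕ → ℕ → ℂ) : ℕ → ℕ → ℂ :=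
  fun k n => ∑ j ∈ Finset.Icc k n, A k j * B j n

/-- The identity matrix. -/
def triId : ℕ → ℕ → ℂ := fun k n => if k = n then 1 else 0

/-- Powers of a matrix: `A^0 = I`, `A^{s+1} = A^s · A`. -/
def triPow (A : ℕ → ℕ → ℂ) : ℕ → ℕ → ℕ → ℂ
  | 0 => triId
  | s + 1 => triMul (triPow A s) A

/-- Composition `F ∘ G` of formal power series (intended for `G` with zero
constant coefficient): the coefficient of `t^n` is `∑_{j=0}^{n} F_j · [t^n](G^j)`. -/
def psComp (F G : PowerSeries ℂ) : PowerSeries ℂ :=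
  PowerSeries.mk fun n =>
    ∑ j ∈ Finset.range (n + 1), (PowerSeries.coeff (R := ℂ) j F) * (PowerSeries.coeff (R := ℂ) n (G ^ j))

/-- Iterated composition: `φ^⟨0⟩ = t`, `φ^⟨s+1⟩ = φ^⟨s⟩ ∘ φ`. -/
def iterComp (φ : PowerSeries ℂ) : ℕ → PowerSeries ℂ
  | 0 => PowerSeries.X
  | s + 1 => psComp (iterComp φ s) φ

/-- The partial Bell polynomial of a power series `F` with `F(0) = 0`:
`B_{n,k}(F) = (n!/k!)·[t^n](F(t)^k)`. -/
def bellPartial (F : PowerSeries ℂ) (n k : ℕ) : ℂ :=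
  (n.factorial : ℂ) / (k.factorial : ℂ) * PowerSeries.coeff (R := ℂ) n (F ^ k)

lemma triMul_congr {A A' B B' : ℕ → ℕ → ℂ} {k n : ℕ} (hA : ∀ j ∈ Icc k n, A k j = A' k j)
    (hB : ∀ j ∈ Icc k n, B j n = B' j n) : triMul A B k n = triMul A' B' k n :=
  sum_congr rfl fun j hj => by rw [hA j hj, hB j hj]

lemma triMul_assoc (A B C : ℕ → ℕ → ℂ) (k n : ℕ) :
    triMul (triMul A B) C k n = triMul A (triMul B C) k n := by
  simp only [triMul, sum_mul, mul_sum, mul_assoc]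
  exact sum_comm' fun i j => by simp only [mem_Icc]; omega

lemma triMul_triId (A : ℕ → ℕ → ℂ) {k n : ℕ} (h : k ≤ n) : triMul A triId k n = A k n := by
  simp [triMul, triId, h]

lemma triId_triMul (A : ℕ → ℕ → ℂ) {k n : ℕ} (h : k ≤ n) : triMul triId A k n = A k n := by
  simp [triMul, triId, h]

lemma triMul_left_inv_eq_right_inv {A B C : ℕ → ℕ → ℂ}
    (hBA : ∀ k n, 1 ≤ k → k ≤ n → triMul B A k n = triId k n)
    (hAC : ∀ k n, 1 ≤ k → k ≤ n → triMul A C k n = triId k n) {k n : ℕ} (hk : 1 ≤ k)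
    (hkn : k ≤ n) : B k n = C k n :=
  calc B k n = triMul B triId k n := (triMul_triId B hkn).symm
    _ = triMul B (triMul A C) k n := triMul_congr (fun _ _ => rfl) fun j hj =>
      (hAC j n (hk.trans (mem_Icc.1 hj).1) (mem_Icc.1 hj).2).symm
    _ = triMul (triMul B A) C k n := (triMul_assoc B A C k n).symm
    _ = triMul triId C k n := triMul_congr (fun i hi => hBA k i hk (mem_Icc.1 hi).1) fun _ _ => rfl
    _ = C k n := triId_triMul C hkn

lemma coeff_pow_eq_zero_of_lt {G : ℂ⟦X⟧} (hG : constantCoeff G = 0) {n j : ℕ} (h : n < j) :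
    coeff n (G ^ j) = 0 :=
  X_pow_dvd_iff.mp (pow_dvd_pow_of_dvd (X_dvd_iff.mpr hG) j) n h

lemma coeff_psComp (F G : ℂ⟦X⟧) (n : ℕ) :
    coeff n (psComp F G) = ∑ j ∈ range (n + 1), coeff j F * coeff n (G ^ j) :=
  coeff_mk _ _

lemma psComp_eq_subst {G : ℂ⟦X⟧} (hG : constantCoeff G = 0) (F : ℂ⟦X⟧) :
    psComp F G = F.subst G := by
  ext n
  rw [coeff_subst' (HasSubst.of_constantCoeff_zero' hG), coeff_psComp,
    finsum_eq_sum_of_support_subset (s := range (n + 1))]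
  · simp only [smul_eq_mul]
  · intro j hj
    rw [coe_range, Set.mem_Iio]
    by_contra h
    exact hj (show coeff j F • coeff n (G ^ j) = 0 by
      rw [coeff_pow_eq_zero_of_lt hG (by omega), smul_zero])

lemma psComp_pow {G : ℂ⟦X⟧} (hG : constantCoeff G = 0) (F : ℂ⟦X⟧) (k : ℕ) :
    psComp (F ^ k) G = psComp F G ^ k := by
  rw [psComp_eq_subst hG, psComp_eq_subst hG, subst_pow (HasSubst.of_constantCoeff_zero' hG)]

lemma constantCoeff_psComp {F : ℂ⟦X⟧} (hF : constantCoeff F = 0) (G : ℂ⟦X⟧) :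
    constantCoeff (psComp F G) = 0 := by
  rw [← coeff_zero_eq_constantCoeff_apply, coeff_psComp]
  simp [hF]

lemma constantCoeff_iterComp (ψ : ℂ⟦X⟧) (s : ℕ) :
    constantCoeff (iterComp ψ s) = 0 := by
  induction s with
  | zero => exact constantCoeff_X
  | succ s ih => exact constantCoeff_psComp ih ψ

lemma bellPartial_X (n k : ℕ) : bellPartial X n k = triId k n := by
  unfold bellPartial triId
  rw [coeff_X_pow]
  by_cases h : k = n
  · subst h
    simp [Nat.factorial_ne_zero]
  · simp [h, Ne.symm h]

lemma sum_bellPartial_mul_bellPartial {F G : ℂ⟦X⟧} (hF : constantCoeff F = 0)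
    (hG : constantCoeff G = 0) (k n : ℕ) :
    ∑ j ∈ Icc k n, bellPartial F j k * bellPartial G n j = bellPartial (psComp F G) n k := by
  have hsupport : ∑ j ∈ Icc k n, coeff j (F ^ k) * coeff n (G ^ j)
      = ∑ j ∈ range (n + 1), coeff j (F ^ k) * coeff n (G ^ j) := by
    refine sum_subset (fun j hj => mem_range.2 (by grind)) fun j hj hjk => ?_
    rw [mem_range] at hj
    rw [mem_Icc] at hjk
    rw [coeff_pow_eq_zero_of_lt hF (by omega), zero_mul]
  unfold bellPartial
  rw [← psComp_pow hG, coeff_psComp, ← hsupport, mul_sum]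
  refine sum_congr rfl fun j _ => ?_
  have := Nat.cast_ne_zero (R := ℂ) |>.mpr (Nat.factorial_ne_zero j)
  field_simp

def bellMatrix (a : ℕ → ℂ) (F : ℂ⟦X⟧) : ℕ → ℕ → ℂ :=
  fun k n => a k / a n * bellPartial F n k

section bellMatrix

variable {a : ℕ → ℂ} (ha : ∀ n, 1 ≤ n → a n ≠ 0)
include ha

lemma bellMatrix_X {k : ℕ} (hk : 1 ≤ k) (n : ℕ) : bellMatrix a X k n = triId k n := by
  unfold bellMatrix
  rw [bellPartial_X]
  by_cases h : k = n
  · subst h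
    simp [triId, div_self (ha k hk)]
  · simp [triId, h]

lemma triMul_bellMatrix {F G : ℂ⟦X⟧} (hF : constantCoeff F = 0) (hG : constantCoeff G = 0)
    {k : ℕ} (hk : 1 ≤ k) (n : ℕ) :
    triMul (bellMatrix a F) (bellMatrix a G) k n = bellMatrix a (psComp F G) k n := by
  unfold triMul bellMatrix
  rw [← sum_bellPartial_mul_bellPartial hF hG, mul_sum]
  refine sum_congr rfl fun j hj => ?_
  calc a k / a j * bellPartial F j k * (a j / a n * bellPartial G n j)
      = a k / a j * (a j / a n) * (bellPartial F j k * bellPartial G n j) := by ring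
    _ = a k / a n * (bellPartial F j k * bellPartial G n j) := by
      rw [div_mul_div_cancel₀ (ha j (hk.trans (mem_Icc.1 hj).1))]

end bellMatrix

lemma triPow_eq_bellMatrix_iterComp {a : ℕ → ℂ} (ha : ∀ n, 1 ≤ n → a n ≠ 0) {ψ : ℂ⟦X⟧}
    (hψ : constantCoeff ψ = 0) {B : ℕ → ℕ → ℂ}
    (hB : ∀ k n, 1 ≤ k → k ≤ n → B k n = bellMatrix a ψ k n) (s : ℕ) {k n : ℕ} (hk : 1 ≤ k)
    (hkn : k ≤ n) : triPow B s k n = bellMatrix a (iterComp ψ s) k n := by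
  induction s generalizing n with
  | zero => exact (bellMatrix_X ha hk n).symm
  | succ s ih =>
    calc triPow B (s + 1) k n = triMul (bellMatrix a (iterComp ψ s)) (bellMatrix a ψ) k n :=
          triMul_congr (fun j hj => ih (mem_Icc.1 hj).1) fun j hj =>
            hB j n (hk.trans (mem_Icc.1 hj).1) (mem_Icc.1 hj).2
      _ = bellMatrix a (iterComp ψ (s + 1)) k n :=
          triMul_bellMatrix ha (constantCoeff_iterComp ψ s) hψ hk n

theorem stmt12_general (a : ℕ → ℂ) (ha : ∀ n, 1 ≤ n → a n ≠ 0)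
    (φ : PowerSeries ℂ)
    (hφ0 : constantCoeff (R := ℂ) φ = 0)
    (ψ : PowerSeries ℂ) (hψ0 : constantCoeff (R := ℂ) ψ = 0)
    (hφψ : psComp φ ψ = PowerSeries.X)
    (A B : ℕ → ℕ → ℂ)
    (hA : ∀ k n, 1 ≤ k → k ≤ n → A k n = a k / a n * bellPartial φ n k)
    (hBA : ∀ k n, 1 ≤ k → 1 ≤ n → triMul B A k n = triId k n)
    (s : ℕ) (k n : ℕ) (hk : 1 ≤ k) (hkn : k ≤ n) :
    triPow B s k n = a k / a n * bellPartial (iterComp ψ s) n k := by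
  have hAψ : ∀ k n, 1 ≤ k → k ≤ n → triMul A (bellMatrix a ψ) k n = triId k n :=
    fun k n hk _ => by
      rw [triMul_congr (A' := bellMatrix a φ) (fun j hj => hA k j hk (mem_Icc.1 hj).1)
          (fun _ _ => rfl), triMul_bellMatrix ha hφ0 hψ0 hk, hφψ, bellMatrix_X ha hk]
  have hB : ∀ k n, 1 ≤ k → k ≤ n → B k n = bellMatrix a ψ k n := fun k n hk hkn =>
    triMul_left_inv_eq_right_inv (fun k n hk hkn => hBA k n hk (hk.trans hkn)) hAψ hk hkn
  exact triPow_eq_bellMatrix_iterComp ha hψ0 hB s hk hkn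

/-- Corollary: with `ψ = φ^⟨-1⟩` and `B` an upper triangular two-sided inverse of the
matrix `[A]_{k,n} = (a_k/a_n)·B_{n,k}(φ)`, one has `[B^s]_{k,n} = (a_k/a_n)·B_{n,k}(ψ^⟨s⟩)`. -/
theorem stmt12 (a : ℕ → ℂ) (ha : ∀ n, 1 ≤ n → a n ≠ 0)
    (φ : PowerSeries ℂ)
    (hφ0 : constantCoeff (R := ℂ) φ = 0)
    (hφ1 : constantCoeff (R := ℂ) (derivativeFun φ) ≠ 0)
    (ψ : PowerSeries ℂ) (hψ0 : constantCoeff (R := ℂ) ψ = 0)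
    (hψφ : psComp ψ φ = PowerSeries.X) (hφψ : psComp φ ψ = PowerSeries.X)
    (A B : ℕ → ℕ → ℂ)
    (hAtri : ∀ k n, n < k → A k n = 0)
    (hBtri : ∀ k n, n < k → B k n = 0)
    (hA : ∀ k n, 1 ≤ k → k ≤ n → A k n = a k / a n * bellPartial φ n k)
    (hAB : ∀ k n, 1 ≤ k → 1 ≤ n → triMul A B k n = triId k n)
    (hBA : ∀ k n, 1 ≤ k → 1 ≤ n → triMul B A k n = triId k n)
    (s : ℕ) (k n : ℕ) (hk : 1 ≤ k) (hkn : k ≤ n) :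
    triPow B s k n = a k / a n * bellPartial (iterComp ψ s) n k :=
  stmt12_general a ha φ hφ0 ψ hψ0 hφψ A B hA hBA s k n hk hkn
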